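/- arXiv:math/0606667 — 8 statements merged into one kernel-verified Lean document; each statement's English description precedes it below -/
import Mathlib

section
/- Let φ : G → G be surjective and a homomorphism with respect to ∗, i.e. φ(g₁ ∗ g₂) = φ(g₁) ∗ φ(g₂) for all g₁, g₂ ∈ G. Then φ is a homomorphism of (G, ∘), i.e. φ(g₁ ∘ g₂) = φ(g₁) ∘ φ(g₂) for all g₁, g₂ ∈ G. -/
/-- Let `(G, ∘)` be a finite group with `g ∘ g = 1` for all `g`
(hence abelian); for `φ : G → G` define `g₁ ∗ g₂ = g₁ ∘ φ(g₂)`.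
If `φ` is surjective and a homomorphism with respect to `∗`
(`φ(g₁ ∗ g₂) = φ(g₁) ∗ φ(g₂)`), then `φ` is a homomorphism with respect to `∘`. -/
theorem stmt1 {G : Type*} [CommGroup G] [Fintype G] (h2 : ∀ g : G, g * g = 1)
    (φ : G → G) (hsurj : Function.Surjective φ)
    (hstar : ∀ g₁ g₂ : G, φ (g₁ * φ g₂) = φ g₁ * φ (φ g₂)) :
    ∀ g₁ g₂ : G, φ (g₁ * g₂) = φ g₁ * φ g₂ := by
  intro g₁ g₂
  obtain ⟨x, rfl⟩ := hsurj g₂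
  exact hstar g₁ x
end

section
/- For any map φ : G → G and any g₁, g₂ ∈ G, one has g₁ ∗ g₂ = g₂ ∗ g₁ if and only if g₁ ∗ g₁ = g₂ ∗ g₂. In particular, the operation ∗ is commutative if and only if the map g ↦ g ∗ g = g ∘ φ(g) is constant on G. -/
/-- Let `(G, ∘)` be a finite group with `g ∘ g = 1` for all `g`
(hence abelian); for `φ : G → G` define `g₁ ∗ g₂ = g₁ ∘ φ(g₂)`.
For any map `φ` and any `g₁ g₂`, `g₁ ∗ g₂ = g₂ ∗ g₁ ↔ g₁ ∗ g₁ = g₂ ∗ g₂`.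
In particular, `∗` is commutative iff the map `g ↦ g ∗ g = g ∘ φ(g)` is constant. -/
theorem stmt2 {G : Type*} [CommGroup G] [Fintype G] (h2 : ∀ g : G, g * g = 1)
    (φ : G → G) :
    (∀ g₁ g₂ : G, g₁ * φ g₂ = g₂ * φ g₁ ↔ g₁ * φ g₁ = g₂ * φ g₂) ∧
      ((∀ g₁ g₂ : G, g₁ * φ g₂ = g₂ * φ g₁) ↔
        (∀ g₁ g₂ : G, g₁ * φ g₁ = g₂ * φ g₂)) := by
  have key : ∀ a b : G, a = b ↔ a * b = 1 := by
    intro a b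
    constructor
    · intro h; subst h; exact h2 a
    · intro h
      have h3 : a * (b * b) = (a * b) * b := (mul_assoc a b b).symm
      rw [h2 b, h, one_mul, mul_one] at h3
      exact h3
  have main : ∀ g₁ g₂ : G, g₁ * φ g₂ = g₂ * φ g₁ ↔ g₁ * φ g₁ = g₂ * φ g₂ := by
    intro g₁ g₂
    rw [key (g₁ * φ g₂) (g₂ * φ g₁), key (g₁ * φ g₁) (g₂ * φ g₂)]
    have : g₁ * φ g₂ * (g₂ * φ g₁) = g₁ * φ g₁ * (g₂ * φ g₂) := by
      simp [mul_comm, mul_left_comm, mul_assoc]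
    rw [this]
  exact ⟨main, ⟨fun h g₁ g₂ => (main g₁ g₂).mp (h g₁ g₂),
    fun h g₁ g₂ => (main g₁ g₂).mpr (h g₁ g₂)⟩⟩
end

section
/- Let φ : G → G be any map (not necessarily a homomorphism) such that the operation ∗ is commutative. Then the preimage φ⁻¹(1) = {g ∈ G : φ(g) = 1} consists of exactly one element ĝ, and this ĝ is the common value of g ∗ g for all g ∈ G, i.e. g ∗ g = ĝ for every g ∈ G and φ(ĝ) = 1. -/
/-- Let `(G, ∘)` be a finite group with `g ∘ g = 1` for all `g`
(hence abelian); for `φ : G → G` define `g₁ ∗ g₂ = g₁ ∘ φ(g₂)`.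
If `∗` is commutative, then `φ⁻¹(1)` consists of exactly one element `ghat`, which is
the common value of `g ∗ g`: `g ∗ g = ghat` for all `g`, `φ(ghat) = 1`, and any `h` with
`φ(h) = 1` equals `ghat`. -/
theorem stmt3 {G : Type*} [CommGroup G] [Fintype G] (h2 : ∀ g : G, g * g = 1)
    (φ : G → G) (hcomm : ∀ g₁ g₂ : G, g₁ * φ g₂ = g₂ * φ g₁) :
    ∃ ghat : G, (∀ g : G, g * φ g = ghat) ∧ φ ghat = 1 ∧ ∀ h : G, φ h = 1 → h = ghat := by
  have key : ∀ g : G, φ g = g * φ 1 := by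
    intro g
    have := hcomm g 1
    rw [one_mul] at this
    rw [← this]
  refine ⟨φ 1, ?_, ?_, ?_⟩
  · intro g
    rw [key g, ← mul_assoc, h2, one_mul]
  · rw [key (φ 1), h2]
  · intro h hh
    rw [key h] at hh
    have := congrArg (· * φ 1) hh
    simp only [mul_assoc, h2, mul_one, one_mul] at this
    exact this
end

section
/- Let φ : G → G be a homomorphism of (G, ∘). Then for every g ∈ G and every integer p > 0, the ∗-iterate g^{∗p} equals the ∘-product, over all k with 0 ≤ k ≤ p − 1 such that the binomial coefficient C(p−1, k) is odd, of the iterates φ^{(k)}(g); equivalently, g^{∗p} = ⨀_{k=0}^{p−1} γ_{k,p} · φ^{(k)}(g), where γ_{k,p} = C(p−1, k) mod 2 are the entries of the binary (mod-2) Pascal triangle, φ^{(0)}(g) = g, φ^{(k)} denotes the k-fold iterate of φ, and the coefficient action is 1·g = g, 0·g = 1. -/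
/-!
Writing `∗`-squaring additively, `x ↦ x ∘ φ(x)` is the endomorphism `1 + φ`, so `g^{∗(n+1)}` is
`(1 + φ)ⁿ g = ∏ₖ φ^{(k)}(g) ^ C(n, k)` by the binomial theorem (proved multiplicatively via
Pascal's rule). Since every element has order dividing `2`, only the parity of `C(n, k)` matters.
-/

/-- The `∗`-iterates: `starIter φ g (p-1)` is `g^{∗p}`, i.e. `g^{∗1} = g` and
`g^{∗(p+1)} = g^{∗p} ∗ g^{∗p} = g^{∗p} ∘ φ(g^{∗p})`. -/
def starIter {G : Type*} [CommGroup G] (φ : G → G) (g : G) : ℕ → G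
  | 0 => g
  | n + 1 => starIter φ g n * φ (starIter φ g n)

open Finset

theorem starIter_eq_prod_pow_choose {G : Type*} [CommGroup G] (φ : G →* G) (g : G) (n : ℕ) :
    starIter φ g n = ∏ k ∈ range (n + 1), φ^[k] g ^ n.choose k := by
  induction n with
  | zero => simp [starIter]
  | succ n ih =>
    rw [starIter, ih, prod_pow_choose_succ (fun k _ ↦ φ^[k] g), map_prod]
    congr 1
    refine prod_congr rfl fun k _ ↦ ?_
    rw [map_pow, Function.iterate_succ_apply']

theorem pow_eq_ite_mod_two {M : Type*} [Monoid M] {x : M} (hx : x * x = 1) (n : ℕ) :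
    x ^ n = if n % 2 = 1 then x else 1 := by
  rw [pow_eq_pow_mod n (by rwa [sq])]
  rcases Nat.mod_two_eq_zero_or_one n with h | h <;> simp [h]

theorem stmt5_general {G : Type*} [CommGroup G] (h2 : ∀ g : G, g * g = 1)
    (φ : G → G) (hφ : ∀ a b : G, φ (a * b) = φ a * φ b) :
    ∀ (g : G) (p : ℕ), 0 < p →
      starIter φ g (p - 1) =
        ∏ k ∈ Finset.range p,
          if Nat.choose (p - 1) k % 2 = 1 then φ^[k] g else 1 := by
  intro g p hp
  obtain ⟨n, rfl⟩ := Nat.exists_eq_add_one_of_ne_zero hp.ne'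
  exact (starIter_eq_prod_pow_choose (MonoidHom.mk' φ hφ) g n).trans
    (prod_congr rfl fun k _ ↦ pow_eq_ite_mod_two (h2 _) _)

/-- Let `(G, ∘)` be a finite group with `g ∘ g = 1` (hence abelian),
`φ : G → G` a homomorphism for `∘`, and `g₁ ∗ g₂ = g₁ ∘ φ(g₂)`.  Then for every `g`
and every `p > 0`, `g^{∗p} = ⨀_{k=0}^{p-1} γ_{k,p} · φ^{(k)}(g)` where
`γ_{k,p} = C(p-1, k) mod 2` (the mod-2 Pascal triangle), `φ^{(k)}` is the `k`-fold
iterate of `φ`, and the coefficient action is `1·g = g`, `0·g = 1`. -/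
theorem stmt5 {G : Type*} [CommGroup G] [Fintype G] (h2 : ∀ g : G, g * g = 1)
    (φ : G → G) (hφ : ∀ a b : G, φ (a * b) = φ a * φ b) :
    ∀ (g : G) (p : ℕ), 0 < p →
      starIter φ g (p - 1) =
        ∏ k ∈ Finset.range p,
          if Nat.choose (p - 1) k % 2 = 1 then φ^[k] g else 1 :=
  stmt5_general h2 φ hφ
end

section
/- Let φ : G → G satisfy φ(1) = 1, and suppose g ∈ G commutes with g^{⊗2} in the sense that [g, g^{⊗2}] = 1. Then g ∈ ker φ^{(2)} \ ker φ (i.e. φ(φ(g)) = 1 and φ(g) ≠ 1) if and only if p∗(g) = 2. -/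
/-- The period `p∗(g) = min {i > 1 | g^{∗i} = g} - 1`, valued in `ℕ∞` so that the
minimum of the empty set is `∞`. -/
noncomputable def pstar {G : Type*} [CommGroup G] (φ : G → G) (g : G) : ℕ∞ :=
  sInf {i : ℕ∞ | ∃ n : ℕ, i = n ∧ 1 < n ∧ starIter φ g (n - 1) = g} - 1

/-- Let `(G, ∘)` be a finite group with `g ∘ g = 1` (hence abelian),
`g₁ ∗ g₂ = g₁ ∘ φ(g₂)`, and let `⊗` satisfy `h ⊗ h = φ(h)` and distribute over `∘`
in both arguments.  If `φ(1) = 1` and `g` commutes with `g^{⊗2}` (i.e. the commutator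
`[g, g^{⊗2}] = (g ⊗ g^{⊗2}) ∘ (g^{⊗2} ⊗ g) = 1`), then
`g ∈ ker φ^{(2)} \ ker φ` (i.e. `φ(φ(g)) = 1` and `φ(g) ≠ 1`) iff `p∗(g) = 2`. -/
theorem stmt7 {G : Type*} [CommGroup G] [Fintype G] (h2 : ∀ g : G, g * g = 1)
    (φ : G → G) (ot : G → G → G) (hsq : ∀ h : G, ot h h = φ h)
    (hld : ∀ a b c : G, ot (a * b) c = ot a c * ot b c)
    (hrd : ∀ a b c : G, ot a (b * c) = ot a b * ot a c)
    (hφ1 : φ 1 = 1) (g : G)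
    (hcomm : ot g (ot g g) * ot (ot g g) g = 1) :
    (φ (φ g) = 1 ∧ φ g ≠ 1) ↔ pstar φ g = 2 := by
  set S : Set ℕ∞ := {i : ℕ∞ | ∃ n : ℕ, i = n ∧ 1 < n ∧ starIter φ g (n - 1) = g} with hS
  -- key computation : starIter φ g 2 = g * φ (φ g)
  have hcomm' : ot g (φ g) * ot (φ g) g = 1 := by rw [← hsq]; exact hcomm
  have hphis1 : φ (g * φ g) = φ g * φ (φ g) := by
    rw [← hsq, hld, hrd, hrd, hsq, hsq]
    calc φ g * ot g (φ g) * (ot (φ g) g * φ (φ g))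
        = φ g * φ (φ g) * (ot g (φ g) * ot (φ g) g) := by
          simp only [mul_comm, mul_left_comm, mul_assoc]
      _ = φ g * φ (φ g) := by rw [hcomm', mul_one]
  have hkey : starIter φ g 2 = g * φ (φ g) := by
    show (g * φ g) * φ (g * φ g) = g * φ (φ g)
    rw [hphis1]
    calc g * φ g * (φ g * φ (φ g)) = g * φ (φ g) * (φ g * φ g) := by
          simp only [mul_comm, mul_left_comm, mul_assoc]
      _ = g * φ (φ g) := by rw [h2, mul_one]
  have hs1 : starIter φ g 1 = g * φ g := rfl
  constructor
  · rintro ⟨hφφ, hφ⟩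
    have h3 : (3 : ℕ∞) ∈ S := ⟨3, rfl, by norm_num, by rw [show (3:ℕ) - 1 = 2 from rfl, hkey, hφφ, mul_one]⟩
    have hlb : ∀ i ∈ S, (3 : ℕ∞) ≤ i := by
      rintro i ⟨n, rfl, hn1, hsn⟩
      rcases Nat.lt_or_ge n 3 with h | h
      · interval_cases n
        · exfalso
          apply hφ
          have : g * φ g = g * 1 := by rw [mul_one]; exact hsn
          exact mul_left_cancel this
      · exact_mod_cast h
    have : sInf S = 3 := le_antisymm (sInf_le h3) (le_sInf hlb)
    rw [pstar, ← hS, this]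
    rfl
  · intro hp
    rw [pstar, ← hS] at hp
    have hne : sInf S ≠ ⊤ := by
      intro h
      rw [h] at hp
      simp at hp
    lift sInf S to ℕ using hne with m hm
    have hm3 : m = 3 := by
      have h2 : m - 1 = 2 := by exact_mod_cast hp
      omega
    have hs3 : sInf S = (3 : ℕ∞) := by rw [← hm, hm3]; rfl
    have hlt : sInf S < 4 := by rw [hs3]; norm_num
    obtain ⟨a, haS, ha4⟩ := sInf_lt_iff.mp hlt
    obtain ⟨n, rfl, hn1, hsn⟩ := haS
    have hge : (3 : ℕ∞) ≤ (n : ℕ∞) := hs3 ▸ sInf_le ⟨n, rfl, hn1, hsn⟩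
    have hn3 : n = 3 := by
      have h1 : n < 4 := by exact_mod_cast ha4
      have h2' : 3 ≤ n := by exact_mod_cast hge
      omega
    rw [hn3] at hsn
    have hsn2 : starIter φ g 2 = g := hsn
    have hφφ : φ (φ g) = 1 := by
      rw [hkey] at hsn2
      have : g * φ (φ g) = g * 1 := by rw [mul_one]; exact hsn2
      exact mul_left_cancel this
    refine ⟨hφφ, fun hφ => ?_⟩
    have h2' : (2 : ℕ∞) ∈ S := ⟨2, rfl, one_lt_two, by rw [show (2:ℕ)-1 = 1 from rfl, hs1, hφ, mul_one]⟩
    have : sInf S ≤ 2 := sInf_le h2'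
    rw [hs3] at this
    norm_num at this
end

section
/- Let φ : G → G satisfy φ(1) = 1, let △ = {h ∈ G : h^{∗2} = h^{⊗4}}, and suppose g ∈ G commutes with both g^{⊗2} and g^{⊗4}, i.e. [g, g^{⊗2}] = 1 and [g, g^{⊗4}] = 1. Then g ∈ φ⁻¹(Im φ ∩ △) \ ker φ (i.e. φ(g) lies in Im φ ∩ △ and φ(g) ≠ 1) if and only if p∗(g) = 3. -/
/-- Dyadic `⊗`-powers: `opow2 ot g j = g^{⊗2^j}`, with `g^{⊗2^0} = g` and
`g^{⊗2^j} = g^{⊗2^{j-1}} ⊗ g^{⊗2^{j-1}}`. -/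
def opow2 {G : Type*} (ot : G → G → G) (g : G) : ℕ → G
  | 0 => g
  | j + 1 => ot (opow2 ot g j) (opow2 ot g j)

lemma ENat.sInf_eq_iff_isLeast {s : Set ℕ∞} {a : ℕ∞} (ha : a ≠ ⊤) :
    sInf s = a ↔ IsLeast s a := by
  refine ⟨fun h => ?_, IsLeast.csInf_eq⟩
  rcases s.eq_empty_or_nonempty with rfl | hs
  · exact absurd (h.symm.trans sInf_empty) ha
  · exact h ▸ ⟨csInf_mem hs, fun x hx => csInf_le (OrderBot.bddBelow s) hx⟩

section Period

variable {G : Type*} [CommGroup G] (φ : G → G) (g : G)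

@[simp]
lemma starIter_one : starIter φ g 1 = g * φ g := rfl

lemma pstar_eq_iff_of_pos {k : ℕ} (hk : 0 < k) :
    pstar φ g = k ↔ starIter φ g k = g ∧ ∀ m, 0 < m → m < k → starIter φ g m ≠ g := by
  have hsub : ∀ x : ℕ∞, x - 1 = k ↔ x = (k + 1 : ℕ) := by
    intro x
    cases x with
    | top => exact iff_of_false (by simp) (ENat.natCast_ne_top _).symm
    | coe n => norm_cast; omega
  rw [pstar, hsub, ENat.sInf_eq_iff_isLeast (ENat.natCast_ne_top _)]
  constructor
  · rintro ⟨⟨n, hn, -, hgn⟩, hlow⟩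
    obtain rfl : n = k + 1 := by exact_mod_cast hn.symm
    refine ⟨hgn, fun m hm hmk hgm => ?_⟩
    have : ((k + 1 : ℕ) : ℕ∞) ≤ (m + 1 : ℕ) := hlow ⟨m + 1, rfl, by omega, hgm⟩
    norm_cast at this
    omega
  · rintro ⟨hgk, hmin⟩
    refine ⟨⟨k + 1, rfl, by omega, hgk⟩, ?_⟩
    rintro _ ⟨n, rfl, hn, hgn⟩
    by_contra! hlt
    norm_cast at hlt
    exact hmin (n - 1) (by omega) (by omega) hgn

end Period

lemma opow2_eq_iterate {G : Type*} {φ : G → G} {ot : G → G → G} (hsq : ∀ h : G, ot h h = φ h)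
    (g : G) (n : ℕ) : opow2 ot g n = φ^[n] g := by
  induction n with
  | zero => rfl
  | succ n ih => rw [opow2, ih, hsq, Function.iterate_succ_apply']

section ExponentTwo

variable {G : Type*} [CommGroup G] {φ : G → G}

lemma map_mul_of_commutator_eq_one {ot : G → G → G} (hsq : ∀ h : G, ot h h = φ h)
    (hld : ∀ a b c : G, ot (a * b) c = ot a c * ot b c)
    (hrd : ∀ a b c : G, ot a (b * c) = ot a b * ot a c) {a b : G}
    (hab : ot a b * ot b a = 1) : φ (a * b) = φ a * φ b := by
  rw [← hsq, hld, hrd, hrd, ← hsq, ← hsq]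
  calc ot a a * ot a b * (ot b a * ot b b)
      = ot a a * ot b b * (ot a b * ot b a) := by ac_rfl
    _ = ot a a * ot b b := by rw [hab, mul_one]

lemma starIter_two (h2 : ∀ g : G, g * g = 1) {g : G} (hg1 : φ (g * φ g) = φ g * φ (φ g)) :
    starIter φ g 2 = g * φ (φ g) := by
  rw [starIter, starIter_one, hg1]
  calc g * φ g * (φ g * φ (φ g)) = g * φ (φ g) * (φ g * φ g) := by ac_rfl
    _ = g * φ (φ g) := by rw [h2, mul_one]

lemma starIter_three (h2 : ∀ g : G, g * g = 1) {g : G} (hg1 : φ (g * φ g) = φ g * φ (φ g))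
    (hg2 : φ (g * φ (φ g)) = φ g * φ (φ (φ g))) :
    starIter φ g 3 = g * (φ (φ g) * (φ g * φ (φ (φ g)))) := by
  rw [starIter, starIter_two h2 hg1, hg2, mul_assoc]

end ExponentTwo

theorem stmt8_general {G : Type*} [CommGroup G] (h2 : ∀ g : G, g * g = 1)
    (φ : G → G) (ot : G → G → G) (hsq : ∀ h : G, ot h h = φ h)
    (hld : ∀ a b c : G, ot (a * b) c = ot a c * ot b c)
    (hrd : ∀ a b c : G, ot a (b * c) = ot a b * ot a c)
    (hφ1 : φ 1 = 1) (g : G)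
    (hcomm2 : ot g (opow2 ot g 1) * ot (opow2 ot g 1) g = 1)
    (hcomm4 : ot g (opow2 ot g 2) * ot (opow2 ot g 2) g = 1) :
    (φ g ∈ Set.range φ ∩ {h : G | starIter φ h 1 = opow2 ot h 2} ∧ φ g ≠ 1) ↔
      pstar φ g = 3 := by
  have hg1 : φ (g * φ g) = φ g * φ (φ g) :=
    map_mul_of_commutator_eq_one hsq hld hrd (by rwa [opow2_eq_iterate hsq] at hcomm2)
  have hg2 : φ (g * φ (φ g)) = φ g * φ (φ (φ g)) :=
    map_mul_of_commutator_eq_one hsq hld hrd (by rwa [opow2_eq_iterate hsq] at hcomm4)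
  have hpstar := pstar_eq_iff_of_pos φ g (k := 3) (by norm_num)
  have hbelow3 : ∀ P : ℕ → Prop, (∀ m, 0 < m → m < 3 → P m) ↔ P 1 ∧ P 2 :=
    fun P => ⟨fun h => ⟨h 1 (by norm_num) (by norm_num), h 2 (by norm_num) (by norm_num)⟩,
      fun ⟨h1, h2⟩ m hm hm3 => by interval_cases m <;> assumption⟩
  rw [Nat.cast_ofNat] at hpstar
  rw [hpstar, hbelow3, starIter_three h2 hg1 hg2, starIter_two h2 hg1, starIter_one]
  simp only [Set.mem_inter_iff, Set.mem_range_self, Set.mem_ofPred_eq, true_and, starIter_one,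
    opow2_eq_iterate hsq, Function.iterate_succ_apply', Function.iterate_zero_apply, ne_eq,
    mul_eq_left]
  set a := φ g
  set b := φ a
  set c := φ b
  have htriangle : a * b = c ↔ b * (a * c) = 1 := by
    rw [← mul_assoc, mul_comm b a, mul_eq_one_iff_eq_inv, inv_eq_of_mul_eq_one_right (h2 c)]
  have hb : a * b = c → a ≠ 1 → b ≠ 1 := fun habc ha hb1 =>
    ha (by rw [← mul_one a, ← hb1, habc, show c = φ b from rfl, hb1, hφ1])
  rw [← htriangle]
  tauto

/-- Let `(G, ∘)` be a finite group with `g ∘ g = 1` (hence abelian),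
`g₁ ∗ g₂ = g₁ ∘ φ(g₂)`, and let `⊗` satisfy `h ⊗ h = φ(h)` and distribute over `∘`
in both arguments.  Suppose `φ(1) = 1`, let `△ = {h | h^{∗2} = h^{⊗4}}`, and suppose
`g` commutes with `g^{⊗2}` and `g^{⊗4}` (commutators `[g, g^{⊗2}] = [g, g^{⊗4}] = 1`).
Then `g ∈ φ⁻¹(Im φ ∩ △) \ ker φ` (i.e. `φ(g) ∈ Im φ ∩ △` and `φ(g) ≠ 1`)
iff `p∗(g) = 3`. -/
theorem stmt8 {G : Type*} [CommGroup G] [Fintype G] (h2 : ∀ g : G, g * g = 1)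
    (φ : G → G) (ot : G → G → G) (hsq : ∀ h : G, ot h h = φ h)
    (hld : ∀ a b c : G, ot (a * b) c = ot a c * ot b c)
    (hrd : ∀ a b c : G, ot a (b * c) = ot a b * ot a c)
    (hφ1 : φ 1 = 1) (g : G)
    (hcomm2 : ot g (opow2 ot g 1) * ot (opow2 ot g 1) g = 1)
    (hcomm4 : ot g (opow2 ot g 2) * ot (opow2 ot g 2) g = 1) :
    (φ g ∈ Set.range φ ∩ {h : G | starIter φ h 1 = opow2 ot h 2} ∧ φ g ≠ 1) ↔
      pstar φ g = 3 :=
  stmt8_general h2 φ ot hsq hld hrd hφ1 g hcomm2 hcomm4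
end

section
/- For any map φ : G → G and ⊗ as above, the fourth ∗-iterate satisfies, for every g ∈ G, g^{∗4} = g ∘ g^{⊗2} ∘ g^{⊗4} ∘ g^{⊗8} ∘ [g, g^{⊗2}] ∘ [g, g^{⊗2}]^{⊗2} ∘ [g, g^{⊗4}] ∘ [g ∘ g^{⊗4}, [g, g^{⊗2}]], where h^{⊗2} = h ⊗ h. In particular, if g commutes with g^{⊗2} and with g^{⊗4} (i.e. [g, g^{⊗2}] = 1 and [g, g^{⊗4}] = 1), then g^{∗4} = g ∘ g^{⊗2} ∘ g^{⊗4} ∘ g^{⊗8}. -/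
/-- The commutator `[a, b] = (a ⊗ b) ∘ (b ⊗ a)`. -/
def commut {G : Type*} [CommGroup G] (ot : G → G → G) (a b : G) : G :=
  ot a b * ot b a

/-- Let `(G, ∘)` be a finite group with `g ∘ g = 1` (hence abelian),
`g₁ ∗ g₂ = g₁ ∘ φ(g₂)`, and `⊗` satisfying `h ⊗ h = φ(h)` and distributing over `∘`
in both arguments.  Then for every `g`,
`g^{∗4} = g ∘ g^{⊗2} ∘ g^{⊗4} ∘ g^{⊗8} ∘ [g, g^{⊗2}] ∘ [g, g^{⊗2}]^{⊗2} ∘ [g, g^{⊗4}]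
∘ [g ∘ g^{⊗4}, [g, g^{⊗2}]]`, where `h^{⊗2} = h ⊗ h`.  In particular, if
`[g, g^{⊗2}] = 1` and `[g, g^{⊗4}] = 1`, then `g^{∗4} = g ∘ g^{⊗2} ∘ g^{⊗4} ∘ g^{⊗8}`. -/
theorem stmt14 {G : Type*} [CommGroup G] [Fintype G] (h2 : ∀ g : G, g * g = 1)
    (φ : G → G) (ot : G → G → G) (hsq : ∀ h : G, ot h h = φ h)
    (hld : ∀ a b c : G, ot (a * b) c = ot a c * ot b c)
    (hrd : ∀ a b c : G, ot a (b * c) = ot a b * ot a c) :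
    ∀ g : G,
      starIter φ g 3 =
          g * opow2 ot g 1 * opow2 ot g 2 * opow2 ot g 3 *
            commut ot g (opow2 ot g 1) *
            ot (commut ot g (opow2 ot g 1)) (commut ot g (opow2 ot g 1)) *
            commut ot g (opow2 ot g 2) *
            commut ot (g * opow2 ot g 2) (commut ot g (opow2 ot g 1)) ∧
        ((commut ot g (opow2 ot g 1) = 1 ∧ commut ot g (opow2 ot g 2) = 1) →
          starIter φ g 3 = g * opow2 ot g 1 * opow2 ot g 2 * opow2 ot g 3) := by
  
  intro g
  have h2' : ∀ a b : G, a * (a * b) = b := by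
    intro a b; rw [← mul_assoc, h2, one_mul]
  have key : ∀ x y : G, x * y = 1 → x = y := by
    intro x y h
    have := congrArg (· * y) h
    simpa [mul_assoc, h2] using this
  have main : starIter φ g 3 =
          g * opow2 ot g 1 * opow2 ot g 2 * opow2 ot g 3 *
            commut ot g (opow2 ot g 1) *
            ot (commut ot g (opow2 ot g 1)) (commut ot g (opow2 ot g 1)) *
            commut ot g (opow2 ot g 2) *
            commut ot (g * opow2 ot g 2) (commut ot g (opow2 ot g 1)) := by
    apply key
    simp only [starIter, opow2, commut, ← hsq]
    simp only [hld, hrd]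
    simp only [mul_assoc]
    simp [h2, h2', mul_comm, mul_left_comm]
  refine ⟨main, ?_⟩
  rintro ⟨hc1, hc2⟩
  have hot1 : ∀ a : G, ot a 1 = 1 := by
    intro a
    have h : ot a 1 * ot a 1 = ot a 1 := by rw [← hrd, one_mul]
    exact ((h2 _).symm.trans h).symm
  have h1ot : ∀ a : G, ot 1 a = 1 := by
    intro a
    have h : ot 1 a * ot 1 a = ot 1 a := by rw [← hld, one_mul]
    exact ((h2 _).symm.trans h).symm
  rw [main, hc1, hc2]
  simp [commut, hot1, h1ot]
end

section
/- Let φ : G → G be a homomorphism of (G, ∘), let ι be the identity map on G, and define (φ + ι)(g) = φ(g) ∘ g. Then for any g ∈ G and any integer p ≥ 2, one has g^{∗p} = g if and only if φ(⨀_{k=0}^{p−2} (φ + ι)^{(k)}(g)) = 1, where ⨀ denotes the ∘-product and (φ + ι)^{(k)} is the k-fold iterate of φ + ι (with (φ + ι)^{(0)} = ι). -/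
lemma starIter_eq_iterate {G : Type*} [CommGroup G] (φ : G → G) (g : G) :
    ∀ n, starIter φ g n = (fun x : G => φ x * x)^[n] g := by
  intro n
  induction n with
  | zero => rfl
  | succ n ih =>
    rw [Function.iterate_succ_apply', ← ih]
    simp [starIter, mul_comm]

lemma starIter_eq_mul_prod {G : Type*} [CommGroup G] (φ : G → G)
    (hφ : ∀ a b : G, φ (a * b) = φ a * φ b) (g : G) :
    ∀ n, starIter φ g n = g * φ (∏ k ∈ Finset.range n, (fun x : G => φ x * x)^[k] g) := by
  have hφ1 : φ 1 = 1 := by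
    have := hφ 1 1; simpa using this.symm
  intro n
  induction n with
  | zero => simp [starIter, hφ1]
  | succ n ih =>
    rw [Finset.prod_range_succ, hφ, ← starIter_eq_iterate]
    show starIter φ g n * φ (starIter φ g n) = _
    rw [ih, mul_assoc]

/-- Let `(G, ∘)` be a finite group with `g ∘ g = 1` (hence abelian),
`g₁ ∗ g₂ = g₁ ∘ φ(g₂)`, `ι` the identity map, and `(φ + ι)(g) = φ(g) ∘ g`.
If `φ` is a homomorphism with respect to `∘`, then for any `g ∈ G` and any `p ≥ 2`,
`g^{∗p} = g  ↔  φ(⨀_{k=0}^{p-2} (φ + ι)^{(k)}(g)) = 1`, where `⨀` is the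
`∘`-product and `(φ + ι)^{(k)}` is the `k`-fold iterate of `φ + ι`
(with `(φ + ι)^{(0)} = ι`). -/
theorem stmt16 {G : Type*} [CommGroup G] [Fintype G] (h2 : ∀ g : G, g * g = 1)
    (φ : G → G) (hφ : ∀ a b : G, φ (a * b) = φ a * φ b) (g : G) :
    ∀ p : ℕ, 2 ≤ p →
      (starIter φ g (p - 1) = g ↔
        φ (∏ k ∈ Finset.range (p - 1), (fun x : G => φ x * x)^[k] g) = 1) := by
  intro p _
  rw [starIter_eq_mul_prod φ hφ]
  exact ⟨fun h => mul_left_cancel (h.trans (mul_one g).symm),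
    fun h => by rw [h, mul_one]⟩
end
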